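/- Let R be a commutative ring and S, T commutative R-algebras via λ: R → S and μ: R → T (more generally, R-algebras with images of λ, μ central). If the pair (λ, μ) is an exact pair, then the noncommutative tensor product T ⊠_R S coincides with the usual tensor product of R-algebras: the multiplication ∘ satisfies (t₁ ⊗ s₁) ∘ (t₂ ⊗ s₂) = t₁t₂ ⊗ s₁s₂. -/

import Mathlib

/-!
Exactness of `(λ, μ)` writes `s₁ ⊗ t₂ = u ⊗ 1 + 1 ⊗ v` in `S ⊗_R T`. Since `λ` and `μ` have
central images, `s ⊗ t ↦ t₁ t ⊗ s s₂` is a well-defined additive map `S ⊗_R T → T ⊗_R S`;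
applied to that identity it turns `t₁ ⊗ u s₂ + t₁ v ⊗ s₂`, the value of the product, into
`t₁ t₂ ⊗ s₁ s₂`.
-/

open MulOpposite
open scoped TensorProduct

universe u

/-- Tensor product over `R` of a right `R`-module and a left `R`-module. -/
noncomputable abbrev tensorOver (R : Type u) [Ring R] {A B : Type u}
    [AddCommGroup A] [AddCommGroup B]
    (ract : A → R → A) (lact : R → B → B) : Type u :=
  (TensorProduct ℤ A B) ⧸
    AddSubgroup.closure {x : TensorProduct ℤ A B |
      ∃ (a : A) (r : R) (b : B), x = (ract a r) ⊗ₜ[ℤ] b - a ⊗ₜ[ℤ] (lact r b)}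

section
variable {R S T : Type u} [CommRing R] [Ring S] [Ring T]

/-- `S ⊗_R T`. -/
noncomputable abbrev TensST (lam : R →+* S) (mu : R →+* T) : Type u :=
  tensorOver R (fun (s : S) (r : R) => s * lam r) (fun (r : R) (t : T) => mu r * t)

/-- The elementary tensor `s ⊗ t` in `S ⊗_R T`. -/
noncomputable def eST (lam : R →+* S) (mu : R →+* T) (s : S) (t : T) : TensST lam mu :=
  QuotientAddGroup.mk (s ⊗ₜ[ℤ] t)

/-- `T ⊗_R S`. -/
noncomputable abbrev TensTS (lam : R →+* S) (mu : R →+* T) : Type u :=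
  tensorOver R (fun (t : T) (r : R) => t * mu r) (fun (r : R) (s : S) => lam r * s)

/-- The elementary tensor `t ⊗ s` in `T ⊗_R S`. -/
noncomputable def eTS (lam : R →+* S) (mu : R →+* T) (t : T) (s : S) : TensTS lam mu :=
  QuotientAddGroup.mk (t ⊗ₜ[ℤ] s)

/-- `(λ, μ)` is an exact pair: `(λ, μ, S ⊗_R T, 1 ⊗ 1)` is an exact context. -/
noncomputable def IsExactPair (lam : R →+* S) (mu : R →+* T) : Prop :=
  Function.Injective (fun r : R => (lam r, mu r)) ∧
  (∀ (s : S) (t : T), eST lam mu s 1 = eST lam mu 1 t ↔ ∃ r : R, lam r = s ∧ mu r = t) ∧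
  (∀ x : TensST lam mu, ∃ (s : S) (t : T), x = eST lam mu s 1 - eST lam mu 1 t)

noncomputable def tensorOver.lift {R : Type u} [Ring R] {A B : Type u} [AddCommGroup A]
    [AddCommGroup B] {M : Type*} [AddCommGroup M] {ract : A → R → A} {lact : R → B → B}
    (f : TensorProduct ℤ A B →+ M) (hf : ∀ a r b, f (ract a r ⊗ₜ b) = f (a ⊗ₜ lact r b)) :
    tensorOver R ract lact →+ M :=
  QuotientAddGroup.lift _ f <| (AddSubgroup.closure_le _).mpr <| by
    rintro _ ⟨a, r, b, rfl⟩
    simp [hf]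

theorem tensorOver.mk_tmul_act {R : Type u} [Ring R] {A B : Type u} [AddCommGroup A]
    [AddCommGroup B] {ract : A → R → A} {lact : R → B → B} (a : A) (r : R) (b : B) :
    (QuotientAddGroup.mk (ract a r ⊗ₜ b) : tensorOver R ract lact) =
      QuotientAddGroup.mk (a ⊗ₜ lact r b) :=
  QuotientAddGroup.eq_iff_sub_mem.mpr (AddSubgroup.subset_closure ⟨a, r, b, rfl⟩)

theorem eST_neg_right (lam : R →+* S) (mu : R →+* T) (s : S) (t : T) :
    eST lam mu s (-t) = -eST lam mu s t := by
  simp [eST, TensorProduct.tmul_neg]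

theorem IsExactPair.exists_eq_eST_add_eST {lam : R →+* S} {mu : R →+* T}
    (hpair : IsExactPair lam mu) (x : TensST lam mu) :
    ∃ (u : S) (v : T), x = eST lam mu u 1 + eST lam mu 1 v := by
  obtain ⟨u, w, rfl⟩ := hpair.2.2 x
  exact ⟨u, -w, by rw [eST_neg_right, sub_eq_add_neg]⟩

noncomputable def flipMul (lam : R →+* S) (mu : R →+* T)
    (hcS : ∀ (r : R) (s : S), lam r * s = s * lam r)
    (hcT : ∀ (r : R) (t : T), mu r * t = t * mu r)
    (t₁ : T) (s₂ : S) : TensST lam mu →+ TensTS lam mu :=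
  tensorOver.lift
    ((QuotientAddGroup.mk' _).comp
      ((TensorProduct.map (LinearMap.mulLeft ℤ t₁) (LinearMap.mulRight ℤ s₂)) ∘ₗ
        (TensorProduct.comm ℤ S T).toLinearMap).toAddMonoidHom)
    (fun s r t => by
      simp only [AddMonoidHom.comp_apply, QuotientAddGroup.mk'_apply,
        LinearMap.toAddMonoidHom_coe, LinearMap.comp_apply, LinearEquiv.coe_coe,
        TensorProduct.comm_tmul, TensorProduct.map_tmul, LinearMap.mulLeft_apply,
        LinearMap.mulRight_apply]
      rw [← hcS, mul_assoc, hcT, ← mul_assoc t₁]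
      exact (tensorOver.mk_tmul_act (t₁ * t) r (s * s₂)).symm)

theorem flipMul_eST (lam : R →+* S) (mu : R →+* T)
    (hcS : ∀ (r : R) (s : S), lam r * s = s * lam r)
    (hcT : ∀ (r : R) (t : T), mu r * t = t * mu r)
    (t₁ : T) (s₂ : S) (s : S) (t : T) :
    flipMul lam mu hcS hcT t₁ s₂ (eST lam mu s t) = eTS lam mu (t₁ * t) (s * s₂) :=
  rfl

theorem stmt7_general (lam : R →+* S) (mu : R →+* T)
    (hcS : ∀ (r : R) (s : S), lam r * s = s * lam r)
    (hcT : ∀ (r : R) (t : T), mu r * t = t * mu r)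
    (hpair : IsExactPair lam mu)
    (mul : TensTS lam mu → TensTS lam mu → TensTS lam mu)
    (hchar : ∀ (t₁ : T) (s₁ : S) (t₂ : T) (s₂ : S) (u : S) (v : T),
        eST lam mu s₁ t₂ = eST lam mu u 1 + eST lam mu 1 v →
        mul (eTS lam mu t₁ s₁) (eTS lam mu t₂ s₂) =
          eTS lam mu t₁ (u * s₂) + eTS lam mu (t₁ * v) s₂) :
    ∀ (t₁ : T) (s₁ : S) (t₂ : T) (s₂ : S),
      mul (eTS lam mu t₁ s₁) (eTS lam mu t₂ s₂) = eTS lam mu (t₁ * t₂) (s₁ * s₂) := by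
  intro t₁ s₁ t₂ s₂
  obtain ⟨u, v, huv⟩ := hpair.exists_eq_eST_add_eST (eST lam mu s₁ t₂)
  rw [hchar t₁ s₁ t₂ s₂ u v huv]
  simpa only [map_add, flipMul_eST, mul_one, one_mul] using
    (congrArg (flipMul lam mu hcS hcT t₁ s₂) huv).symm

/-- Let `R` be a commutative ring and `S`, `T` be `R`-algebras via
`λ` and `μ` (i.e. the images of `λ`, `μ` are central).  If `(λ, μ)` is an exact pair,
then the multiplication of the noncommutative tensor product `T ⊠_R S` of the exact
context `(λ, μ, S ⊗_R T, 1 ⊗ 1)` coincides with the usual tensor product of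
`R`-algebras: `(t₁ ⊗ s₁) ∘ (t₂ ⊗ s₂) = t₁t₂ ⊗ s₁s₂`.  The multiplication `mul` is
characterized by `(t₁ ⊗ s₁) ∘ (t₂ ⊗ s₂) = t₁(1 ⊗ u + v ⊗ 1)s₂` whenever
`s₁·(1⊗1)·t₂ = u·(1⊗1) + (1⊗1)·v` in `S ⊗_R T`. -/
theorem stmt7 (lam : R →+* S) (mu : R →+* T)
    (hcS : ∀ (r : R) (s : S), lam r * s = s * lam r)
    (hcT : ∀ (r : R) (t : T), mu r * t = t * mu r)
    (hpair : IsExactPair lam mu)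
    (mul : TensTS lam mu → TensTS lam mu → TensTS lam mu)
    (hdl : ∀ x y z : TensTS lam mu, mul (x + y) z = mul x z + mul y z)
    (hdr : ∀ x y z : TensTS lam mu, mul x (y + z) = mul x y + mul x z)
    (hchar : ∀ (t₁ : T) (s₁ : S) (t₂ : T) (s₂ : S) (u : S) (v : T),
        eST lam mu s₁ t₂ = eST lam mu u 1 + eST lam mu 1 v →
        mul (eTS lam mu t₁ s₁) (eTS lam mu t₂ s₂) =
          eTS lam mu t₁ (u * s₂) + eTS lam mu (t₁ * v) s₂) :
    ∀ (t₁ : T) (s₁ : S) (t₂ : T) (s₂ : S),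
      mul (eTS lam mu t₁ s₁) (eTS lam mu t₂ s₂) = eTS lam mu (t₁ * t₂) (s₁ * s₂) :=
  stmt7_general lam mu hcS hcT hpair mul hchar

end
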